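/- arXiv:2412.03678 — 3 statements merged into one kernel-verified Lean document; each statement's English description precedes it below -/
import Mathlib

section
/- Let h₁, h₂ : [t₀, ∞) → ℝ be differentiable, c₁, c₂ > 0, with h₁'(t) = -c₁·h₁(t) + h₂(t) for all t, h₂(t₀) > 0, h₁(t₀) > 0, and h₂'(t) ≥ -c₂·h₂(t) for all t. Then h₁(t) ≥ h₁(t₀)·e^{-c₁(t - t₀)} > 0 for all t ≥ t₀. -/
/-!
Both links are handled by one comparison principle: if `f' ≥ -c f` on `[t₀, ∞)` then
`f t ≥ f t₀ e^{-c(t - t₀)}`, because `f t e^{c(t - t₀)}` has nonnegative derivative there.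
Applied to `h₂` it keeps `h₂` positive; then `h₁' = -c₁ h₁ + h₂ ≥ -c₁ h₁`, and applied to `h₁`
it gives the bound.
-/

open Real Set

theorem monotoneOn_Ici_of_hasDerivAt_nonneg {f f' : ℝ → ℝ} {t₀ : ℝ}
    (hf : ∀ t ≥ t₀, HasDerivAt f (f' t) t) (hf' : ∀ t ≥ t₀, 0 ≤ f' t) :
    MonotoneOn f (Ici t₀) := by
  refine monotoneOn_of_hasDerivWithinAt_nonneg (f' := f') (convex_Ici t₀)
    (fun t ht => (hf t ht).continuousAt.continuousWithinAt) (fun t ht => ?_) (fun t ht => ?_)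
  · rw [interior_Ici] at ht
    exact (hf t ht.le).hasDerivWithinAt
  · rw [interior_Ici] at ht
    exact hf' t ht.le

theorem hasDerivAt_mul_exp_mul_sub {f : ℝ → ℝ} {f' c t₀ t : ℝ} (hf : HasDerivAt f f' t) :
    HasDerivAt (fun s => f s * exp (c * (s - t₀)))
      ((f' + c * f t) * exp (c * (t - t₀))) t := by
  have hexp : HasDerivAt (fun s => exp (c * (s - t₀))) (exp (c * (t - t₀)) * c) t :=
    (((hasDerivAt_id t).sub_const t₀).const_mul c).exp.congr_deriv (by simp)
  exact (hf.mul hexp).congr_deriv (by ring)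

theorem mul_exp_neg_mul_sub_le_of_hasDerivAt {f f' : ℝ → ℝ} {t₀ c : ℝ}
    (hf : ∀ t ≥ t₀, HasDerivAt f (f' t) t) (hf' : ∀ t ≥ t₀, -c * f t ≤ f' t) :
    ∀ t ≥ t₀, f t₀ * exp (-c * (t - t₀)) ≤ f t := by
  intro t ht
  have hmono : MonotoneOn (fun s => f s * exp (c * (s - t₀))) (Ici t₀) :=
    monotoneOn_Ici_of_hasDerivAt_nonneg (fun s hs => hasDerivAt_mul_exp_mul_sub (hf s hs))
      (fun s hs => mul_nonneg (by linarith [hf' s hs]) (exp_pos _).le)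
  have hle : f t₀ ≤ f t * exp (c * (t - t₀)) := by
    simpa using hmono self_mem_Ici ht ht
  calc f t₀ * exp (-c * (t - t₀))
      ≤ f t * exp (c * (t - t₀)) * exp (-c * (t - t₀)) :=
        mul_le_mul_of_nonneg_right hle (exp_pos _).le
    _ = f t := by rw [mul_assoc, ← exp_add, neg_mul, add_neg_cancel, exp_zero, mul_one]

theorem two_link_backstepping_general (t₀ c₁ c₂ : ℝ)
    (h₁ h₂ h₂' : ℝ → ℝ)
    (hderiv₁ : ∀ t ≥ t₀, HasDerivAt h₁ (-c₁ * h₁ t + h₂ t) t)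
    (hderiv₂ : ∀ t ≥ t₀, HasDerivAt h₂ (h₂' t) t)
    (hineq₂ : ∀ t ≥ t₀, h₂' t ≥ -c₂ * h₂ t)
    (hinit₁ : h₁ t₀ > 0) (hinit₂ : h₂ t₀ > 0) :
    ∀ t ≥ t₀, h₁ t ≥ h₁ t₀ * Real.exp (-c₁ * (t - t₀)) ∧
      h₁ t₀ * Real.exp (-c₁ * (t - t₀)) > 0 := by
  have h₂_pos : ∀ t ≥ t₀, 0 < h₂ t := fun t ht =>
    (by positivity : 0 < h₂ t₀ * exp (-c₂ * (t - t₀))).trans_le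
      (mul_exp_neg_mul_sub_le_of_hasDerivAt hderiv₂ hineq₂ t ht)
  have h₁_bound := mul_exp_neg_mul_sub_le_of_hasDerivAt hderiv₁
    (fun t ht => by linarith [h₂_pos t ht])
  exact fun t ht => ⟨h₁_bound t ht, by positivity⟩

theorem two_link_backstepping (t₀ c₁ c₂ : ℝ) (hc₁ : 0 < c₁) (hc₂ : 0 < c₂)
    (h₁ h₂ h₂' : ℝ → ℝ)
    (hderiv₁ : ∀ t ≥ t₀, HasDerivAt h₁ (-c₁ * h₁ t + h₂ t) t)
    (hderiv₂ : ∀ t ≥ t₀, HasDerivAt h₂ (h₂' t) t)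
    (hineq₂ : ∀ t ≥ t₀, h₂' t ≥ -c₂ * h₂ t)
    (hinit₁ : h₁ t₀ > 0) (hinit₂ : h₂ t₀ > 0) :
    ∀ t ≥ t₀, h₁ t ≥ h₁ t₀ * Real.exp (-c₁ * (t - t₀)) ∧
      h₁ t₀ * Real.exp (-c₁ * (t - t₀)) > 0 :=
  two_link_backstepping_general t₀ c₁ c₂ h₁ h₂ h₂' hderiv₁ hderiv₂ hineq₂ hinit₁ hinit₂
end

section
/- Let n ≥ 1 and h₁, …, h_n : [t₀, ∞) → ℝ be differentiable with h_j(t₀) > 0 for all j, h_j'(t) = -c_j·h_j(t) + h_{j+1}(t) for j = 1, …, n-1, and h_n'(t) ≥ -c_n·h_n(t), where all c_j > 0. Then h₁(t) ≥ h₁(t₀)·e^{-c₁(t - t₀)} for all t ≥ t₀; in particular h₁(t) ≥ 0 for all t ≥ t₀. -/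
/-!
If `f' ≥ -c f` then `e^{c (t - t₀)} f(t)` is nondecreasing, so `f(t) ≥ f(t₀) e^{-c (t - t₀)}`,
which is positive when `f(t₀) > 0`. This applies to `h_n` directly, and to `h_j` for `j < n` as soon
as `h_{j+1}` is known to be positive, because then `h_j' = -c_j h_j + h_{j+1} ≥ -c_j h_j`.
Backward induction from `j = n` down to `j = 1` gives the bound on `h₁`.
-/

open Real Set

theorem exp_decay_le_of_hasDerivAt {f f' : ℝ → ℝ} {t₀ c : ℝ}
    (hf : ∀ t ≥ t₀, HasDerivAt f (f' t) t) (hf' : ∀ t ≥ t₀, f' t ≥ -c * f t) :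
    ∀ t ≥ t₀, f t ≥ f t₀ * exp (-c * (t - t₀)) := by
  set g : ℝ → ℝ := fun t ↦ exp (c * (t - t₀)) * f t
  have hg : ∀ t ≥ t₀, HasDerivAt g (exp (c * (t - t₀)) * (f' t + c * f t)) t := by
    intro t ht
    have hexp : HasDerivAt (fun t ↦ exp (c * (t - t₀))) (exp (c * (t - t₀)) * c) t := by
      simpa using (((hasDerivAt_id t).sub_const t₀).const_mul c).exp
    exact (hexp.mul (hf t ht)).congr_deriv (by ring)
  have hmono : MonotoneOn g (Ici t₀) := by
    refine monotoneOn_of_hasDerivWithinAt_nonneg (convex_Ici t₀)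
      (fun t ht ↦ (hg t ht).continuousAt.continuousWithinAt)
      (fun t ht ↦ (hg t (interior_subset ht)).hasDerivWithinAt) fun t ht ↦ ?_
    have : 0 ≤ f' t + c * f t := by linarith [hf' t (interior_subset ht)]
    positivity
  intro t ht
  have hle : f t₀ ≤ exp (c * (t - t₀)) * f t := by
    simpa [g] using hmono self_mem_Ici ht ht
  calc f t₀ * exp (-c * (t - t₀)) ≤ exp (c * (t - t₀)) * f t * exp (-c * (t - t₀)) := by
        gcongr
    _ = f t := by
        rw [mul_right_comm, ← exp_add]
        simp

theorem exp_decay_le_of_hasDerivAt_chain {n : ℕ} {t₀ : ℝ} {h h' : Fin n → ℝ → ℝ} {c : Fin n → ℝ}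
    (hinit : ∀ j, 0 < h j t₀) (hderiv : ∀ j, ∀ t ≥ t₀, HasDerivAt (h j) (h' j t) t)
    (hchain : ∀ (j : Fin n) (hj : (j : ℕ) + 1 < n), ∀ t ≥ t₀,
      h' j t ≥ -c j * h j t + h ⟨(j : ℕ) + 1, hj⟩ t)
    (hlast : ∀ j : Fin n, (j : ℕ) + 1 = n → ∀ t ≥ t₀, h' j t ≥ -c j * h j t) (j : Fin n) :
    ∀ t ≥ t₀, h j t ≥ h j t₀ * exp (-c j * (t - t₀)) := by
  induction j using WellFoundedGT.induction with | _ j ih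
  refine exp_decay_le_of_hasDerivAt (hderiv j) fun t ht ↦ ?_
  by_cases hj : (j : ℕ) + 1 < n
  · have hnext_pos : 0 < h ⟨(j : ℕ) + 1, hj⟩ t :=
      (mul_pos (hinit _) (exp_pos _)).trans_le (ih _ (Fin.lt_def.2 (Nat.lt_succ_self j)) t ht)
    linarith [hchain j hj t ht]
  · exact hlast j (by omega) t ht

theorem backstepping_chain_safety (n : ℕ) (hn : 1 ≤ n) (t₀ : ℝ)
    (h : Fin n → ℝ → ℝ) (h' : Fin n → ℝ → ℝ) (c : Fin n → ℝ)
    (hinit : ∀ j, h j t₀ > 0)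
    (hderiv : ∀ j, ∀ t ≥ t₀, HasDerivAt (h j) (h' j t) t)
    (hchain : ∀ (j : Fin n) (hj : (j : ℕ) + 1 < n), ∀ t ≥ t₀,
      h' j t = -c j * h j t + h ⟨(j : ℕ) + 1, hj⟩ t)
    (hlast : ∀ t ≥ t₀, h' ⟨n - 1, by omega⟩ t ≥ -c ⟨n - 1, by omega⟩ * h ⟨n - 1, by omega⟩ t) :
    ∀ t ≥ t₀, h ⟨0, by omega⟩ t ≥ h ⟨0, by omega⟩ t₀ *
        Real.exp (-c ⟨0, by omega⟩ * (t - t₀)) ∧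
      h ⟨0, by omega⟩ t ≥ 0 := by
  have hlast' : ∀ j : Fin n, (j : ℕ) + 1 = n → ∀ t ≥ t₀, h' j t ≥ -c j * h j t := by
    intro j hj
    rwa [show j = ⟨n - 1, by omega⟩ from Fin.ext (Nat.eq_sub_of_add_eq hj)]
  have hbound := exp_decay_le_of_hasDerivAt_chain hinit hderiv
    (fun j hj t ht ↦ (hchain j hj t ht).ge) hlast' ⟨0, by omega⟩
  intro t ht
  exact ⟨hbound t ht, ((mul_pos (hinit _) (exp_pos _)).trans_le (hbound t ht)).le⟩
end

section
/- Let α : ℝ → ℝ be an extended class-K∞ function (strictly increasing, α(0) = 0, unbounded above and below) and h : [t₀,∞) → ℝ differentiable with h(t₀) ≥ 0 and h'(t) ≥ -α(h(t)) for all t. If additionally α is locally Lipschitz, then h(t) ≥ 0 for all t ≥ t₀. -/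
/-!
Wherever `h < 0` we have `h' ≥ -α h > 0`, so `h` cannot decrease while it is negative. Hence,
after the last time `s ≤ t` at which `h ≥ 0`, the function is monotone on `[s, t]`, and
`h t ≥ h s ≥ 0`.
-/

open Set

theorem ContinuousOn.exists_last_nonneg {f : ℝ → ℝ} {a b : ℝ} (hab : a ≤ b)
    (hf : ContinuousOn f (Icc a b)) (ha : 0 ≤ f a) :
    ∃ s ∈ Icc a b, 0 ≤ f s ∧ ∀ t ∈ Ioc s b, f t < 0 := by
  set S := Icc a b ∩ f ⁻¹' Ici 0
  have hS : IsCompact S := isCompact_Icc.of_isClosed_subset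
    (hf.preimage_isClosed_of_isClosed isClosed_Icc isClosed_Ici) inter_subset_left
  obtain ⟨s, ⟨hs, hfs⟩, hmax⟩ := hS.exists_isGreatest ⟨a, ⟨left_mem_Icc.2 hab, ha⟩⟩
  refine ⟨s, hs, hfs, fun t ht => ?_⟩
  by_contra! hft
  exact (hmax ⟨⟨hs.1.trans ht.1.le, ht.2⟩, hft⟩).not_gt ht.1

theorem nonneg_of_deriv_nonneg_where_neg {f f' : ℝ → ℝ} {a b : ℝ} (hab : a ≤ b)
    (hf : ContinuousOn f (Icc a b)) (hderiv : ∀ t ∈ Ioo a b, HasDerivAt f (f' t) t)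
    (hf' : ∀ t ∈ Ioo a b, f t < 0 → 0 ≤ f' t) (ha : 0 ≤ f a) : 0 ≤ f b := by
  obtain ⟨s, hs, hfs, hneg⟩ := hf.exists_last_nonneg hab ha
  have hsub : Icc s b ⊆ Icc a b := Icc_subset_Icc_left hs.1
  have hmono : MonotoneOn f (Icc s b) := by
    refine monotoneOn_of_hasDerivWithinAt_nonneg (f' := f') (convex_Icc s b) (hf.mono hsub)
      (fun t ht => ?_) (fun t ht => ?_) <;> rw [interior_Icc] at ht
    · exact (hderiv t ⟨hs.1.trans_lt ht.1, ht.2⟩).hasDerivWithinAt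
    · exact hf' t ⟨hs.1.trans_lt ht.1, ht.2⟩ (hneg t ⟨ht.1, ht.2.le⟩)
  exact hfs.trans (hmono (left_mem_Icc.2 hs.2) (right_mem_Icc.2 hs.2) hs.2)

theorem cbf_forward_invariance_general (t₀ : ℝ) (α : ℝ → ℝ)
    (hα_mono : StrictMono α) (hα_zero : α 0 = 0)
    (h h' : ℝ → ℝ)
    (hderiv : ∀ t ≥ t₀, HasDerivAt h (h' t) t)
    (hineq : ∀ t ≥ t₀, h' t ≥ -α (h t))
    (hinit : 0 ≤ h t₀) :
    ∀ t ≥ t₀, 0 ≤ h t := by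
  intro t ht
  have hα_neg : ∀ x < 0, α x < 0 := fun x hx => hα_zero ▸ hα_mono hx
  refine nonneg_of_deriv_nonneg_where_neg ht
    (fun s hs => (hderiv s hs.1).continuousAt.continuousWithinAt)
    (fun s hs => hderiv s hs.1.le) (fun s hs hhs => ?_) hinit
  linarith [hineq s hs.1.le, hα_neg _ hhs]

theorem cbf_forward_invariance (t₀ : ℝ) (α : ℝ → ℝ)
    (hα_mono : StrictMono α) (hα_zero : α 0 = 0)
    (hα_above : ¬ BddAbove (Set.range α)) (hα_below : ¬ BddBelow (Set.range α))
    (hα_lip : LocallyLipschitz α)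
    (h h' : ℝ → ℝ)
    (hderiv : ∀ t ≥ t₀, HasDerivAt h (h' t) t)
    (hineq : ∀ t ≥ t₀, h' t ≥ -α (h t))
    (hinit : 0 ≤ h t₀) :
    ∀ t ≥ t₀, 0 ≤ h t :=
  cbf_forward_invariance_general t₀ α hα_mono hα_zero h h' hderiv hineq hinit
end
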